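/- Let Φ(y) = (2π)^{−1/2} ∫_{−∞}^{y} e^{−t²/2} dt be the standard normal distribution function, and let q : (0,1) → ℝ be any function satisfying Φ(q(s)) = 1 − s for all s ∈ (0,1). Then for every x > 0: lim_{s→0⁺} ( 4 log(1/s) / log log(1/s) )·( (2 log(1/s))^{1/2}·(q(s) − q(xs)) − log x ) = log x (the expression being taken for s small enough that xs ∈ (0,1)). -/

import Mathlib

/-!
Write `T y = ∫_y^∞ e^{-t²/2} dt`, so that `T (q s) = s √(2π)`. Mills' inequalities
`y / (y² + 1) e^{-y²/2} ≤ T y ≤ e^{-y²/2} / y` give `-log T y = y²/2 + log y + O(y⁻²)`. With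
`L = log (1/s)`, `A = q s` and `B = q (x s)` this reads
`2L = A² + 2 log A + log (2π) + O(A⁻²)` and `2L = B² + 2 log B + log (2π) + 2 log x + O(B⁻²)`.
These two equations alone force `A, B ~ √(2L) =: S`, `2L - A² ~ 2L - B² ~ log L` and
`A² - B² = 2 log x + O(1/L)`. Now
`S (A - B) - log x = S (A² - B² - 2 log x) / (A + B) + log x ((S - A) + (S - B)) / (A + B)`
with `S - A = (2L - A²) / (S + A) ~ log L / (2S)`: after multiplication by `4L / log L` the
second term tends to `log x` and the first to `0`.
-/

open Filter Topology Set MeasureTheory Asymptotics Real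

lemma tendsto_atTop_of_antitone_of_tendsto_zero {α β : Type*} [LinearOrder β] {l : Filter α}
    {f : β → ℝ} {q : α → β} (hf : Antitone f) (hpos : ∀ y, 0 < f y)
    (h : Tendsto (fun s => f (q s)) l (𝓝 0)) : Tendsto q l atTop :=
  tendsto_atTop.2 fun M => (h.eventually (gt_mem_nhds (hpos M))).mono fun _ hs =>
    le_of_not_gt fun hlt => (hf hlt.le).not_gt hs

lemma tendsto_const_mul_nhdsGT_zero {x : ℝ} (hx : 0 < x) :
    Tendsto (x * ·) (𝓝[>] 0) (𝓝[>] 0) :=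
  tendsto_comap.mono_left (comap_mulLeft_nhdsGT_zero hx).ge

lemma isBigO_log_sub_one {α : Type*} {l : Filter α} {f : α → ℝ} (hf : Tendsto f l (𝓝 1)) :
    (fun s => log (f s)) =O[l] fun s => f s - 1 := by
  simpa [Function.comp_def] using (hasDerivAt_log one_ne_zero).isBigO_sub.comp_tendsto hf

noncomputable def gaussianTail (y : ℝ) : ℝ := ∫ t in Ioi y, exp (-t ^ 2 / 2)

lemma integrable_exp_neg_sq_div_two : Integrable fun t : ℝ => exp (-t ^ 2 / 2) := by
  simpa [neg_div, div_eq_inv_mul, mul_comm] using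
    integrable_exp_neg_mul_sq (b := 1 / 2) (by norm_num)

lemma integral_exp_neg_sq_div_two : ∫ t : ℝ, exp (-t ^ 2 / 2) = √(2 * π) := by
  simpa [neg_div, div_eq_inv_mul, mul_comm] using integral_gaussian (1 / 2)

lemma integral_Iic_add_gaussianTail (y : ℝ) :
    (∫ t in Iic y, exp (-t ^ 2 / 2)) + gaussianTail y = √(2 * π) := by
  rw [gaussianTail, intervalIntegral.integral_Iic_add_Ioi integrable_exp_neg_sq_div_two.integrableOn
    integrable_exp_neg_sq_div_two.integrableOn, integral_exp_neg_sq_div_two]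

lemma gaussianTail_pos (y : ℝ) : 0 < gaussianTail y := by
  refine (setIntegral_pos_iff_support_of_nonneg_ae (.of_forall fun t => (exp_pos _).le)
    integrable_exp_neg_sq_div_two.integrableOn).2 ?_
  simp [Function.support, (exp_pos _).ne', Real.volume_Ioi]

lemma gaussianTail_antitone : Antitone gaussianTail := fun _ _ hyz =>
  setIntegral_mono_set integrable_exp_neg_sq_div_two.integrableOn
    (.of_forall fun _ => (exp_pos _).le) (.of_forall fun _ ht => lt_of_le_of_lt hyz ht)

lemma hasDerivAt_exp_neg_sq_div_two (t : ℝ) :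
    HasDerivAt (fun t => exp (-t ^ 2 / 2)) (-t * exp (-t ^ 2 / 2)) t := by
  have h : HasDerivAt (fun t : ℝ => -t ^ 2 / 2) (-t) t :=
    ((hasDerivAt_pow 2 t).neg.div_const 2).congr_deriv (by ring)
  simpa [mul_comm] using h.exp

lemma tendsto_exp_neg_sq_div_two : Tendsto (fun t : ℝ => exp (-t ^ 2 / 2)) atTop (𝓝 0) := by
  refine tendsto_exp_atBot.comp ?_
  exact (tendsto_neg_atTop_atBot.comp
    ((tendsto_pow_atTop two_ne_zero).atTop_div_const two_pos)).congr fun t => by simp [neg_div]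

lemma gaussianTail_le_div (y : ℝ) (hy : 0 < y) : gaussianTail y ≤ exp (-y ^ 2 / 2) / y := by
  have hderiv : ∀ t ∈ Ici y, HasDerivAt (fun t => -exp (-t ^ 2 / 2) / y)
      (t * exp (-t ^ 2 / 2) / y) t := fun t _ => by
    simpa [neg_mul, neg_div, neg_neg] using ((hasDerivAt_exp_neg_sq_div_two t).neg.div_const y)
  have hint : IntegrableOn (fun t => t * exp (-t ^ 2 / 2) / y) (Ioi y) := by
    refine (Integrable.div_const ?_ y).integrableOn
    simpa [neg_div, div_eq_inv_mul, mul_comm] using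
      integrable_mul_exp_neg_mul_sq (b := 1 / 2) (by norm_num)
  have hlim : Tendsto (fun t => -exp (-t ^ 2 / 2) / y) atTop (𝓝 0) := by
    simpa using (tendsto_exp_neg_sq_div_two.neg.div_const y)
  calc gaussianTail y ≤ ∫ t in Ioi y, t * exp (-t ^ 2 / 2) / y :=
        setIntegral_mono_on integrable_exp_neg_sq_div_two.integrableOn hint measurableSet_Ioi
          fun t (ht : y < t) => by
            rw [le_div_iff₀ hy, mul_comm]
            exact mul_le_mul_of_nonneg_right ht.le (exp_pos _).le
    _ = exp (-y ^ 2 / 2) / y := by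
        rw [integral_Ioi_of_hasDerivAt_of_tendsto' hderiv hint hlim]; ring

lemma div_sq_add_one_mul_le_gaussianTail (y : ℝ) :
    y / (y ^ 2 + 1) * exp (-y ^ 2 / 2) ≤ gaussianTail y := by
  -- compare with `t / (t² + 1) e^{-t²/2}`, whose derivative is at least `-e^{-t²/2}`
  set G' : ℝ → ℝ := fun t => (1 - 2 * t ^ 2 - t ^ 4) / (t ^ 2 + 1) ^ 2 * exp (-t ^ 2 / 2)
  have hderiv (t : ℝ) : HasDerivAt (fun t => t / (t ^ 2 + 1) * exp (-t ^ 2 / 2)) (G' t) t := by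
    have hfrac : HasDerivAt (fun t : ℝ => t / (t ^ 2 + 1))
        ((1 * (t ^ 2 + 1) - t * (2 * t)) / (t ^ 2 + 1) ^ 2) t :=
      ((hasDerivAt_id' t).div ((hasDerivAt_pow 2 t).add_const 1) (by positivity)).congr_deriv
        (by ring)
    refine (hfrac.mul (hasDerivAt_exp_neg_sq_div_two t)).congr_deriv ?_
    simp only [G']
    field_simp
    ring
  have hG'_le (t : ℝ) : |G' t| ≤ exp (-t ^ 2 / 2) := by
    have hden : (0 : ℝ) < (t ^ 2 + 1) ^ 2 := by positivity
    rw [abs_mul, abs_of_pos (exp_pos _), abs_div, abs_of_pos hden]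
    refine mul_le_of_le_one_left (exp_pos _).le ((div_le_one hden).2 (abs_le.2 ⟨?_, ?_⟩)) <;>
      nlinarith [sq_nonneg t, sq_nonneg (t ^ 2)]
  have hint : IntegrableOn G' (Ioi y) :=
    (integrable_exp_neg_sq_div_two.mono' (by fun_prop) (.of_forall hG'_le)).integrableOn
  have hlim : Tendsto (fun t => t / (t ^ 2 + 1) * exp (-t ^ 2 / 2)) atTop (𝓝 0) := by
    refine squeeze_zero_norm (fun t => ?_) tendsto_exp_neg_sq_div_two
    have hden : (0 : ℝ) < t ^ 2 + 1 := by positivity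
    rw [norm_mul, norm_div, norm_of_nonneg (exp_pos _).le, Real.norm_eq_abs, Real.norm_eq_abs,
      abs_of_pos hden]
    refine mul_le_of_le_one_left (exp_pos _).le ((div_le_one hden).2 ?_)
    nlinarith [sq_abs t, sq_nonneg (|t| - 1)]
  calc y / (y ^ 2 + 1) * exp (-y ^ 2 / 2) = ∫ t in Ioi y, -G' t := by
        rw [integral_neg, integral_Ioi_of_hasDerivAt_of_tendsto' (fun t _ => hderiv t) hint hlim]
        ring
    _ ≤ gaussianTail y :=
        setIntegral_mono_on hint.neg integrable_exp_neg_sq_div_two.integrableOn measurableSet_Ioi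
          fun t _ => neg_le.2 (abs_le.1 (hG'_le t)).1

noncomputable def gaussianTailRemainder (y : ℝ) : ℝ := -log (gaussianTail y) - y ^ 2 / 2 - log y

lemma gaussianTailRemainder_nonneg {y : ℝ} (hy : 0 < y) : 0 ≤ gaussianTailRemainder y := by
  have h := log_le_log (gaussianTail_pos y) (gaussianTail_le_div y hy)
  rw [log_div (exp_pos _).ne' hy.ne', log_exp] at h
  unfold gaussianTailRemainder
  linarith

lemma gaussianTailRemainder_le {y : ℝ} (hy : 0 < y) :
    gaussianTailRemainder y ≤ (y ^ 2)⁻¹ := by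
  have hy2 : 0 < y ^ 2 := by positivity
  have h := log_le_log (by positivity) (div_sq_add_one_mul_le_gaussianTail y)
  rw [log_mul (by positivity) (exp_pos _).ne', log_div hy.ne' (by positivity), log_exp] at h
  have hlog : log (y ^ 2 + 1) - 2 * log y ≤ (y ^ 2)⁻¹ := by
    calc log (y ^ 2 + 1) - 2 * log y = log (1 + (y ^ 2)⁻¹) := by
          rw [show 2 * log y = log (y ^ 2) by simp [log_pow], ← log_div (by positivity) hy2.ne']
          congr 1
          field_simp
      _ ≤ (y ^ 2)⁻¹ := by
          linarith [log_le_sub_one_of_pos (by positivity : 0 < 1 + (y ^ 2)⁻¹)]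
  unfold gaussianTailRemainder
  linarith

lemma isBigO_gaussianTailRemainder : gaussianTailRemainder =O[atTop] fun y => (y ^ 2)⁻¹ :=
  .of_bound 1 <| (eventually_gt_atTop 0).mono fun y hy => by
    rw [one_mul, norm_of_nonneg (gaussianTailRemainder_nonneg hy), norm_of_nonneg (by positivity)]
    exact gaussianTailRemainder_le hy

lemma two_mul_log_one_div_sub_eq {s y : ℝ} (hs : 0 < s) (h : gaussianTail y = s * √(2 * π)) :
    2 * log (1 / s) - y ^ 2 - 2 * log y - log (2 * π) = 2 * gaussianTailRemainder y := by
  rw [gaussianTailRemainder, h, log_mul hs.ne' (by positivity), log_sqrt (by positivity),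
    one_div, log_inv]
  ring

lemma gaussianTail_eq_of_integral_Iic_eq {y s : ℝ}
    (h : (2 * π) ^ (-(1 / 2) : ℝ) * ∫ t in Iic y, exp (-t ^ 2 / 2) = 1 - s) :
    gaussianTail y = s * √(2 * π) := by
  rw [rpow_neg (by positivity), ← sqrt_eq_rpow, inv_mul_eq_iff_eq_mul₀ (by positivity)] at h
  linear_combination integral_Iic_add_gaussianTail y - h

lemma mul_sqrt_sub_sub_eq {L M S A B a : ℝ} (hS : S ^ 2 = 2 * L) (hS0 : 0 < S) (hA : 0 < A)
    (hB : 0 < B) :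
    4 * L / M * (S * (A - B) - a) =
      a * ((2 * L - A ^ 2) / M * (2 / ((1 + A / S) * (A / S + B / S)))) +
      a * ((2 * L - B ^ 2) / M * (2 / ((1 + B / S) * (A / S + B / S)))) +
      4 * M⁻¹ * ((A / S + B / S)⁻¹ * (L * (A ^ 2 - B ^ 2 - 2 * a))) := by
  obtain rfl : L = S ^ 2 / 2 := by linarith
  field_simp
  ring

section SecondOrder

variable {α : Type*} {l : Filter α} {L A : α → ℝ} {c : ℝ}

lemma tendsto_zero_of_isBigO_inv_sq {f : α → ℝ} (hA : Tendsto A l atTop)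
    (hf : f =O[l] fun s => (A s ^ 2)⁻¹) : Tendsto f l (𝓝 0) :=
  hf.trans_tendsto (tendsto_inv_atTop_zero.comp ((tendsto_pow_atTop two_ne_zero).comp hA))

section

variable (hA : Tendsto A l atTop)
  (he : (fun s => 2 * L s - A s ^ 2 - 2 * log (A s) - c) =O[l] fun s => (A s ^ 2)⁻¹)
include hA he

lemma tendsto_two_mul_div_sq : Tendsto (fun s => 2 * L s / A s ^ 2) l (𝓝 1) := by
  have hA2 : Tendsto (fun s => A s ^ 2) l atTop := (tendsto_pow_atTop two_ne_zero).comp hA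
  have hinv : Tendsto (fun s => (A s ^ 2)⁻¹) l (𝓝 0) := tendsto_inv_atTop_zero.comp hA2
  have hlog : Tendsto (fun s => log (A s ^ 2) / A s ^ 2) l (𝓝 0) :=
    isLittleO_log_id_atTop.tendsto_div_nhds_zero.comp hA2
  have hlim := ((hlog.add (hinv.const_mul c)).add
    ((tendsto_zero_of_isBigO_inv_sq hA he).mul hinv)).const_add 1
  rw [mul_zero, zero_mul, add_zero, add_zero, add_zero] at hlim
  refine hlim.congr' ((hA.eventually_gt_atTop 0).mono fun s hs => ?_)
  rw [log_pow]
  field_simp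
  push_cast
  ring

lemma tendsto_atTop_of_isBigO : Tendsto L l atTop := by
  have h := ((tendsto_pow_atTop two_ne_zero).comp hA).atTop_mul_pos one_pos
    (tendsto_two_mul_div_sq hA he)
  refine (h.atTop_div_const two_pos).congr' ((hA.eventually_gt_atTop 0).mono fun s hs => ?_)
  simp only [Function.comp_apply]
  field_simp

lemma tendsto_div_sqrt_two_mul : Tendsto (fun s => A s / √(2 * L s)) l (𝓝 1) := by
  have h := ((tendsto_two_mul_div_sq hA he).inv₀ one_ne_zero).sqrt
  rw [inv_one, sqrt_one] at h
  refine h.congr' ((hA.eventually_ge_atTop 0).mono fun s hs => ?_)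
  rw [inv_div, sqrt_div (sq_nonneg _), sqrt_sq hs]

lemma tendsto_two_mul_sub_sq_div_log :
    Tendsto (fun s => (2 * L s - A s ^ 2) / log (L s)) l (𝓝 1) := by
  have hL := tendsto_atTop_of_isBigO hA he
  have he0 := tendsto_zero_of_isBigO_inv_sq hA he
  have hratio : Tendsto (fun s => log (2 * L s / A s ^ 2)) l (𝓝 0) := by
    simpa [Function.comp_def] using
      (continuousAt_log one_ne_zero).tendsto.comp (tendsto_two_mul_div_sq hA he)
  have hlim := ((hratio.neg.const_add (log 2 + c)).add he0).mul
    (tendsto_inv_atTop_zero.comp (tendsto_log_atTop.comp hL)) |>.const_add 1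
  rw [mul_zero, add_zero] at hlim
  refine hlim.congr' ?_
  filter_upwards [hA.eventually_gt_atTop 0, hL.eventually_gt_atTop 1] with s hAs hLs
  have hlogL : log (L s) ≠ 0 := (log_pos hLs).ne'
  simp only [Function.comp_apply]
  rw [log_div (by positivity) (by positivity), log_mul two_ne_zero (by positivity), log_pow]
  field_simp
  push_cast
  ring

lemma isBigO_mul_remainder :
    (fun s => L s * (2 * L s - A s ^ 2 - 2 * log (A s) - c)) =O[l] fun _ => (1 : ℝ) := by
  refine ((isBigO_refl L l).mul he).trans ?_
  refine (((tendsto_two_mul_div_sq hA he).div_const 2).isBigO_one ℝ).congr_left fun s => ?_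
  ring

end

variable {B : α → ℝ} {a : ℝ}

lemma isBigO_mul_sq_sub_sq_sub (hA : Tendsto A l atTop) (hB : Tendsto B l atTop)
    (heA : (fun s => 2 * L s - A s ^ 2 - 2 * log (A s) - c) =O[l] fun s => (A s ^ 2)⁻¹)
    (heB : (fun s => 2 * L s - B s ^ 2 - 2 * log (B s) - (c + 2 * a)) =O[l]
      fun s => (B s ^ 2)⁻¹) :
    (fun s => L s * (A s ^ 2 - B s ^ 2 - 2 * a)) =O[l] fun _ => (1 : ℝ) := by
  have hpos : ∀ᶠ s in l, 0 < A s ∧ 0 < B s ∧ 0 < L s :=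
    (hA.eventually_gt_atTop 0).and <| (hB.eventually_gt_atTop 0).and
      ((tendsto_atTop_of_isBigO hA heA).eventually_gt_atTop 0)
  have hsplit : ∀ᶠ s in l, A s ^ 2 - B s ^ 2 - 2 * a = log (B s ^ 2 / A s ^ 2) +
      (2 * L s - B s ^ 2 - 2 * log (B s) - (c + 2 * a)) -
      (2 * L s - A s ^ 2 - 2 * log (A s) - c) := hpos.mono fun s ⟨hAs, hBs, _⟩ => by
    rw [log_div (by positivity) (by positivity), log_pow, log_pow]
    push_cast
    ring
  have hr : Tendsto (fun s => B s ^ 2 / A s ^ 2) l (𝓝 1) := by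
    have h := (tendsto_two_mul_div_sq hA heA).div (tendsto_two_mul_div_sq hB heB) one_ne_zero
    rw [div_one] at h
    refine h.congr' (hpos.mono fun s ⟨hAs, hBs, hLs⟩ => ?_)
    simp only [Pi.div_apply]
    field_simp
  have hdiff : Tendsto (fun s => A s ^ 2 - B s ^ 2) l (𝓝 (2 * a)) := by
    have hlog : Tendsto (fun s => log (B s ^ 2 / A s ^ 2)) l (𝓝 0) := by
      simpa [Function.comp_def] using (continuousAt_log one_ne_zero).tendsto.comp hr
    have h := ((hlog.add (tendsto_zero_of_isBigO_inv_sq hB heB)).sub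
      (tendsto_zero_of_isBigO_inv_sq hA heA)).const_add (2 * a)
    rw [add_zero, sub_zero, add_zero] at h
    exact h.congr' (hsplit.mono fun s hs => by simp only; linarith)
  have hlog : (fun s => L s * log (B s ^ 2 / A s ^ 2)) =O[l] fun _ => (1 : ℝ) := by
    refine ((isBigO_refl L l).mul (isBigO_log_sub_one hr)).trans ?_
    refine ((((tendsto_two_mul_div_sq hA heA).div_const 2).mul hdiff.neg).isBigO_one ℝ).congr' ?_
      .rfl
    filter_upwards [hpos] with s ⟨hAs, hBs, hLs⟩
    field_simp
    ring
  refine ((hlog.add (isBigO_mul_remainder hB heB)).sub (isBigO_mul_remainder hA heA)).congr' ?_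
    .rfl
  filter_upwards [hsplit] with s hs
  rw [hs]
  ring

theorem tendsto_second_order_of_isBigO (hA : Tendsto A l atTop) (hB : Tendsto B l atTop)
    (heA : (fun s => 2 * L s - A s ^ 2 - 2 * log (A s) - c) =O[l] fun s => (A s ^ 2)⁻¹)
    (heB : (fun s => 2 * L s - B s ^ 2 - 2 * log (B s) - (c + 2 * a)) =O[l]
      fun s => (B s ^ 2)⁻¹) :
    Tendsto (fun s => 4 * L s / log (L s) * (√(2 * L s) * (A s - B s) - a)) l (𝓝 a) := by
  have hAS := tendsto_div_sqrt_two_mul hA heA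
  have hBS := tendsto_div_sqrt_two_mul hB heB
  have hweight {X : α → ℝ} (hX : Tendsto X l (𝓝 1)) :
      Tendsto (fun s => 2 / ((1 + X s) * (A s / √(2 * L s) + B s / √(2 * L s)))) l
        (𝓝 (1 / 2)) := by
    have h := (tendsto_const_nhds (x := (2 : ℝ))).div ((hX.const_add 1).mul (hAS.add hBS))
      (by norm_num)
    rwa [show (2 : ℝ) / ((1 + 1) * (1 + 1)) = 1 / 2 by norm_num] at h
  have hA' := ((tendsto_two_mul_sub_sq_div_log hA heA).mul (hweight hAS)).const_mul a
  have hB' := ((tendsto_two_mul_sub_sq_div_log hB heB).mul (hweight hBS)).const_mul a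
  have hrest : Tendsto (fun s => 4 * (log (L s))⁻¹ *
      ((A s / √(2 * L s) + B s / √(2 * L s))⁻¹ * (L s * (A s ^ 2 - B s ^ 2 - 2 * a)))) l
        (𝓝 0) := by
    refine ((isBigO_refl _ _).mul ((((hAS.add hBS).inv₀ (by norm_num)).isBigO_one ℝ).mul
      (isBigO_mul_sq_sub_sq_sub hA hB heA heB))).trans_tendsto ?_
    simpa using ((tendsto_inv_atTop_zero.comp
      (tendsto_log_atTop.comp (tendsto_atTop_of_isBigO hA heA))).const_mul 4)
  have h := (hA'.add hB').add hrest
  rw [show a * (1 * (1 / 2)) + a * (1 * (1 / 2)) + 0 = a by ring] at h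
  refine h.congr' ?_
  filter_upwards [hA.eventually_gt_atTop 0, hB.eventually_gt_atTop 0,
    (tendsto_atTop_of_isBigO hA heA).eventually_gt_atTop 0] with s hAs hBs hLs
  exact (mul_sqrt_sub_sub_eq (sq_sqrt (by positivity)) (by positivity) hAs hBs).symm

end SecondOrder

section Quantile

variable {q : ℝ → ℝ} (hT : ∀ s ∈ Ioo (0 : ℝ) 1, gaussianTail (q s) = s * √(2 * π))
include hT

lemma tendsto_atTop_of_gaussianTail_eq : Tendsto q (𝓝[>] 0) atTop := by
  refine tendsto_atTop_of_antitone_of_tendsto_zero gaussianTail_antitone gaussianTail_pos ?_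
  have h : Tendsto (fun s : ℝ => s * √(2 * π)) (𝓝[>] 0) (𝓝 0) := by
    simpa using ((tendsto_id (x := 𝓝 (0 : ℝ))).mul_const (√(2 * π))).mono_left
      nhdsWithin_le_nhds
  refine h.congr' ?_
  filter_upwards [Ioo_mem_nhdsGT one_pos] with s hs using (hT s hs).symm

lemma isBigO_two_mul_log_one_div_sub {x : ℝ} (hx : 0 < x) :
    (fun s => 2 * log (1 / s) - q (x * s) ^ 2 - 2 * log (q (x * s)) - (log (2 * π) + 2 * log x))
      =O[𝓝[>] 0] fun s => (q (x * s) ^ 2)⁻¹ := by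
  have hmul := tendsto_const_mul_nhdsGT_zero hx
  refine ((isBigO_gaussianTailRemainder.comp_tendsto
    ((tendsto_atTop_of_gaussianTail_eq hT).comp hmul)).const_mul_left 2).congr' ?_ .rfl
  filter_upwards [self_mem_nhdsWithin, hmul.eventually (Ioo_mem_nhdsGT one_pos)] with s hs hxs
  simp only [Function.comp_apply]
  rw [← two_mul_log_one_div_sub_eq hxs.1 (hT _ hxs), one_div, one_div, log_inv, log_inv,
    log_mul hx.ne' (ne_of_gt hs)]
  ring

end Quantile

/-- Second order condition for the standard normal quantile function. -/
theorem normal_second_order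
    (Φ : ℝ → ℝ)
    (hΦ : ∀ y : ℝ, Φ y = (2 * Real.pi) ^ (-(1/2) : ℝ) * ∫ t in Set.Iic y, Real.exp (-t ^ 2 / 2))
    (q : ℝ → ℝ)
    (hq : ∀ s ∈ Set.Ioo (0:ℝ) 1, Φ (q s) = 1 - s)
    (x : ℝ) (hx : 0 < x) :
    Tendsto (fun s => (4 * Real.log (1 / s) / Real.log (Real.log (1 / s))) *
        ((2 * Real.log (1 / s)) ^ ((1:ℝ)/2) * (q s - q (x * s)) - Real.log x))
      (𝓝[>] 0) (𝓝 (Real.log x)) := by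
  have hT (s : ℝ) (hs : s ∈ Ioo (0 : ℝ) 1) : gaussianTail (q s) = s * √(2 * π) :=
    gaussianTail_eq_of_integral_Iic_eq (hΦ (q s) ▸ hq s hs)
  have hq_top := tendsto_atTop_of_gaussianTail_eq hT
  have heA := isBigO_two_mul_log_one_div_sub hT one_pos
  simp only [one_mul, log_one, mul_zero, add_zero] at heA
  have h := tendsto_second_order_of_isBigO hq_top
    (hq_top.comp (tendsto_const_mul_nhdsGT_zero hx)) heA
    (isBigO_two_mul_log_one_div_sub hT hx)
  simpa only [sqrt_eq_rpow, Function.comp_apply] using h
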